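/- Let r≥2 be an integer, d(x)=dist(x,ℤ), and τ_r(x)=Σ_{j≥0} r^{-j} d(r^j x). Then τ_r belongs to P_c with c=r/(r-1): for all n∈ℕ₀, 0≤k≤rⁿ-1, y∈(0,1), Δ_{n,k}(y;τ_r) ≤ -2rⁿ·r/(r-1). Consequently, τ_r is nowhere differentiable. -/

import Mathlib

/-- `C_p(ℝ)`: continuous, periodic with period 1, vanishing at 0. -/
def IsCp (f : ℝ → ℝ) : Prop := Continuous f ∧ (∀ x, f (x + 1) = f x) ∧ f 0 = 0

/-- Forward difference δ⁺_{n,k}(y;f). -/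
noncomputable def delP (r : ℕ) (f : ℝ → ℝ) (n : ℕ) (k : ℤ) (y : ℝ) : ℝ :=
  (f (((k : ℝ) + 1) / (r : ℝ) ^ n) - f (((k : ℝ) + y) / (r : ℝ) ^ n)) / ((1 - y) / (r : ℝ) ^ n)

/-- Backward difference δ⁻_{n,k}(y;f). -/
noncomputable def delM (r : ℕ) (f : ℝ → ℝ) (n : ℕ) (k : ℤ) (y : ℝ) : ℝ :=
  (f (((k : ℝ) + y) / (r : ℝ) ^ n) - f ((k : ℝ) / (r : ℝ) ^ n)) / (y / (r : ℝ) ^ n)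

/-- Second-order central difference Δ_{n,k}(y;f). -/
noncomputable def Del (r : ℕ) (f : ℝ → ℝ) (n : ℕ) (k : ℤ) (y : ℝ) : ℝ :=
  2 * (r : ℝ) ^ n * (delP r f n k y - delM r f n k y)

/-- The operator U: U_ψ(x) = Σ_{j≥0} ψ(rʲx)/rʲ. -/
noncomputable def Uop (r : ℕ) (ψ : ℝ → ℝ) (x : ℝ) : ℝ := ∑' j : ℕ, ψ ((r : ℝ) ^ j * x) / (r : ℝ) ^ j

/-- Distance to the integers. -/
noncomputable def dZ (x : ℝ) : ℝ := Metric.infDist x (Set.range (Int.cast : ℤ → ℝ))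

/-- The generalized Takagi function τ_r. -/
noncomputable def tak (r : ℕ) : ℝ → ℝ := Uop r dZ

/-- The class P_c: Δ_{n,k}(y;f) ≤ -2crⁿ for all admissible (n,k,y). -/
def memP (r : ℕ) (c : ℝ) (f : ℝ → ℝ) : Prop :=
  ∀ (n : ℕ) (k : ℤ), 0 ≤ k → k ≤ (r : ℤ) ^ n - 1 →
    ∀ y ∈ Set.Ioo (0 : ℝ) 1, Del r f n k y ≤ -2 * c * (r : ℝ) ^ n

/-- The parabola q_f(t,x;z). -/
noncomputable def qf (f : ℝ → ℝ) (t x z : ℝ) : ℝ := f z + (x - z) ^ 2 / (2 * t)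


open Set Metric Finset Filter

lemma dZ_eq (x : ℝ) : dZ x = |x - round x| := by
  apply le_antisymm
  · exact (Metric.infDist_le_dist_of_mem (Set.mem_range_self (round x))).trans_eq (Real.dist_eq x _)
  · rw [dZ, Metric.infDist_eq_iInf]
    apply le_ciInf
    rintro ⟨_, z, rfl⟩
    rw [Real.dist_eq]
    exact round_le x z

lemma dZ_nonneg (x : ℝ) : 0 ≤ dZ x := Metric.infDist_nonneg

lemma dZ_le_half (x : ℝ) : dZ x ≤ 1/2 := by rw [dZ_eq]; exact abs_sub_round x

lemma dZ_le_abs (x : ℝ) (m : ℤ) : dZ x ≤ |x - m| := by rw [dZ_eq]; exact round_le x m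

lemma dZ_add_int (x : ℝ) (m : ℤ) : dZ (x + m) = dZ x := by
  rw [dZ_eq, dZ_eq, round_add_intCast]
  push_cast
  ring_nf

lemma dZ_int (m : ℤ) : dZ (m : ℝ) = 0 := by
  rw [dZ_eq]; simp

lemma dZ_eq_min {x : ℝ} (h0 : 0 ≤ x) (h1 : x ≤ 1) : dZ x = min x (1 - x) := by
  apply le_antisymm
  · apply le_min
    · have h := dZ_le_abs x 0
      push_cast at h
      rwa [sub_zero, abs_of_nonneg h0] at h
    · have h := dZ_le_abs x 1
      push_cast at h
      rwa [abs_sub_comm, abs_of_nonneg (by linarith)] at h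
  · rw [dZ_eq]
    rcases le_or_gt (round x) 0 with h | h
    · have hz' : ((round x : ℤ) : ℝ) ≤ 0 := by exact_mod_cast h
      calc min x (1 - x) ≤ x := min_le_left _ _
        _ ≤ x - round x := by linarith
        _ ≤ |x - round x| := le_abs_self _
    · have hz' : (1 : ℝ) ≤ ((round x : ℤ) : ℝ) := by exact_mod_cast h
      calc min x (1 - x) ≤ 1 - x := min_le_right _ _
        _ ≤ round x - x := by linarith
        _ ≤ |x - round x| := by rw [abs_sub_comm]; exact le_abs_self _

lemma dZ_fract (x : ℝ) : dZ (Int.fract x) = dZ x := by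
  conv_rhs => rw [← Int.fract_add_floor x]
  rw [dZ_add_int]

lemma dZ_concave (m : ℤ) : ConcaveOn ℝ (Icc (m : ℝ) ((m : ℝ) + 1)) dZ := by
  have key : ∀ z ∈ Icc (m : ℝ) ((m : ℝ) + 1), dZ z = min (z - m) ((m : ℝ) + 1 - z) := by
    intro z hz
    have h1 : dZ z = dZ (z - m) := by
      rw [← dZ_add_int (z - m) m]; ring_nf
    rw [h1, dZ_eq_min (by linarith [hz.1]) (by linarith [hz.2])]
    congr 1
    ring
  refine ⟨convex_Icc _ _, ?_⟩
  intro x hx y hy a b ha hb hab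
  have hmem : a • x + b • y ∈ Icc (m : ℝ) ((m : ℝ) + 1) := (convex_Icc _ _) hx hy ha hb hab
  rw [key _ hmem]
  simp only [smul_eq_mul] at *
  have hdx1 : dZ x ≤ x - m := by rw [key x hx]; exact min_le_left _ _
  have hdx2 : dZ x ≤ (m : ℝ) + 1 - x := by rw [key x hx]; exact min_le_right _ _
  have hdy1 : dZ y ≤ y - m := by rw [key y hy]; exact min_le_left _ _
  have hdy2 : dZ y ≤ (m : ℝ) + 1 - y := by rw [key y hy]; exact min_le_right _ _
  have habm : a * (m : ℝ) + b * (m : ℝ) = (m : ℝ) := by rw [← add_mul, hab, one_mul]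
  apply le_min
  · have h1 := mul_le_mul_of_nonneg_left hdx1 ha
    have h2 := mul_le_mul_of_nonneg_left hdy1 hb
    nlinarith [h1, h2]
  · have h1 := mul_le_mul_of_nonneg_left hdx2 ha
    have h2 := mul_le_mul_of_nonneg_left hdy2 hb
    nlinarith [h1, h2]

section
variable {r : ℕ}

lemma hr1R (hr : 2 ≤ r) : (1:ℝ) < (r:ℝ) := by exact_mod_cast Nat.lt_of_lt_of_le one_lt_two hr

lemma tak_summable (hr : 2 ≤ r) (x : ℝ) :
    Summable (fun j : ℕ => dZ ((r : ℝ) ^ j * x) / (r : ℝ) ^ j) := by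
  have hr0 : (0:ℝ) < r := by linarith [hr1R hr]
  have hinv : ((r:ℝ)⁻¹) < 1 := by
    rw [inv_lt_one_iff₀]
    right
    exact hr1R hr
  refine Summable.of_nonneg_of_le (fun j => div_nonneg (dZ_nonneg _) (by positivity))
    (fun j => ?_) ((summable_geometric_of_lt_one (by positivity) hinv).mul_left (1/2 : ℝ))
  calc dZ ((r:ℝ)^j * x) / (r:ℝ)^j ≤ (1/2) / (r:ℝ)^j := by
        gcongr; exact dZ_le_half _
    _ = (1/2 : ℝ) * ((r:ℝ)⁻¹)^j := by rw [div_eq_mul_inv, inv_pow]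

lemma tak_apply (x : ℝ) : tak r x = ∑' j : ℕ, dZ ((r : ℝ) ^ j * x) / (r : ℝ) ^ j := rfl

lemma tak_nonneg (x : ℝ) : 0 ≤ tak r x :=
  tsum_nonneg fun j => div_nonneg (dZ_nonneg _) (by positivity)

lemma tak_add_int (x : ℝ) (m : ℤ) : tak r (x + m) = tak r x := by
  rw [tak_apply, tak_apply]
  congr 1
  funext j
  have h : (r:ℝ)^j * (x + m) = (r:ℝ)^j * x + (((r:ℤ)^j * m : ℤ) : ℝ) := by push_cast; ring
  rw [h, dZ_add_int]

lemma poly {R u v I : ℝ} (h2 : 2 ≤ R) (hI0 : 0 ≤ I) (hI : 0 ≤ I * (I - 1)) (hv : 0 ≤ v)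
    (hv1 : v ≤ 1) (huv : I + v = R * u) : R * (u * (1 - u)) ≤ u * (R - 1) + v * (1 - v) := by
  have hR : (0:ℝ) < R := by linarith
  have key2 : (R*u) * (R - R*u) ≤ (R*u) * (R - 1) + R * (v * (1 - v)) := by
    rw [← huv]
    nlinarith [hI, mul_nonneg hI0 hv,
      mul_nonneg (mul_nonneg (by linarith : (0:ℝ) ≤ R - 1) hv) (by linarith : (0:ℝ) ≤ 1 - v)]
  have h3 : R * (R * (u * (1 - u))) ≤ R * (u * (R - 1) + v * (1 - v)) := by linarith [key2, (by ring : (R*u) * (R - R*u) = R * (R * (u * (1-u)))), (by ring : (R*u) * (R - 1) + R * (v * (1 - v)) = R * (u * (R - 1) + v * (1 - v)))]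
  exact le_of_mul_le_mul_left h3 hR

lemma keyK (hr : 2 ≤ r) {y : ℝ} (h0 : 0 ≤ y) (h1 : y < 1) :
    (r:ℝ)/((r:ℝ)-1) * (y*(1-y)) ≤
      dZ y + ((r:ℝ)/((r:ℝ)-1)/(r:ℝ)) * (Int.fract ((r:ℝ)*y) * (1 - Int.fract ((r:ℝ)*y))) := by
  have hrR := hr1R hr
  have hr2 : (2:ℝ) ≤ (r:ℝ) := by exact_mod_cast hr
  have hd : (0:ℝ) < (r:ℝ) - 1 := by linarith
  have hr0 : (0:ℝ) < r := by linarith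
  set s := Int.fract ((r:ℝ)*y) with hs
  set i := ⌊(r:ℝ)*y⌋ with hi
  have his : (i:ℝ) + s = (r:ℝ)*y := by
    rw [hs, hi]; linarith [Int.fract_add_floor ((r:ℝ)*y)]
  have hs0 : 0 ≤ s := Int.fract_nonneg _
  have hs1 : s < 1 := Int.fract_lt_one _
  have hi0 : (0:ℤ) ≤ i := Int.floor_nonneg.2 (by positivity)
  have hsimp : (r:ℝ)/((r:ℝ)-1)/(r:ℝ) = 1/((r:ℝ)-1) := by
    field_simp
  rw [hsimp, div_mul_eq_mul_div, div_le_iff₀ hd]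
  have expand : (dZ y + 1/((r:ℝ)-1) * (s*(1-s))) * ((r:ℝ)-1) = dZ y * ((r:ℝ)-1) + s*(1-s) := by
    field_simp
  rw [expand]
  rcases le_or_gt y (1/2) with hy | hy
  · have hdz : dZ y = y := by
      rw [dZ_eq_min h0 (by linarith)]; exact min_eq_left (by linarith)
    rw [hdz]
    have hii : 0 ≤ (i:ℝ) * ((i:ℝ) - 1) := by
      rcases eq_or_lt_of_le hi0 with h | h
      · simp [← h]
      · have h' : (1:ℝ) ≤ (i:ℝ) := by exact_mod_cast h
        nlinarith
    have := poly hr2 (by exact_mod_cast hi0) hii hs0 hs1.le his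
    linarith
  · have hdz : dZ y = 1 - y := by
      rw [dZ_eq_min h0 (by linarith)]; exact min_eq_right (by linarith)
    rw [hdz]
    set j : ℤ := (r:ℤ) - 1 - i with hj
    have hilt : i < (r:ℤ) := by
      rw [hi]
      apply Int.floor_lt.2
      push_cast
      nlinarith
    have hj0 : (0:ℤ) ≤ j := by omega
    have hjj : 0 ≤ (j:ℝ) * ((j:ℝ) - 1) := by
      rcases eq_or_lt_of_le hj0 with h | h
      · simp [← h]
      · have h' : (1:ℝ) ≤ (j:ℝ) := by exact_mod_cast h
        nlinarith
    have hjs : (j:ℝ) + (1 - s) = (r:ℝ) * (1 - y) := by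
      have : (j:ℝ) = (r:ℝ) - 1 - (i:ℝ) := by rw [hj]; push_cast; ring
      rw [this]; linarith [his]
    have := poly hr2 (by exact_mod_cast hj0) hjj (by linarith : (0:ℝ) ≤ 1 - s)
      (by linarith : (1:ℝ) - s ≤ 1) hjs
    nlinarith [this]
end

section
variable {r : ℕ}

lemma lower_aux (hr : 2 ≤ r) {y : ℝ} (h0 : 0 ≤ y) (h1 : y < 1) (m : ℕ) :
    (r:ℝ)/((r:ℝ)-1) * (y*(1-y)) ≤
      (∑ j ∈ Finset.range m, dZ ((r:ℝ)^j * y) / (r:ℝ)^j) +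
        ((r:ℝ)/((r:ℝ)-1)/(r:ℝ)^m) *
          (Int.fract ((r:ℝ)^m * y) * (1 - Int.fract ((r:ℝ)^m * y))) := by
  induction m with
  | zero =>
    simp only [Finset.range_zero, Finset.sum_empty, pow_zero, one_mul, div_one, zero_add]
    rw [Int.fract_eq_self.2 ⟨h0, h1⟩]
  | succ m ih =>
    set t := (r:ℝ)^m * y with ht
    set y' := Int.fract t with hy'
    have hK := keyK hr (Int.fract_nonneg t) (Int.fract_lt_one t)
    have hd : dZ y' = dZ t := dZ_fract t
    have hf : Int.fract ((r:ℝ) * y') = Int.fract ((r:ℝ)^(m+1) * y) := by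
      have h2 : (r:ℝ) * y' = (r:ℝ)^(m+1) * y - (((r:ℤ) * ⌊t⌋ : ℤ) : ℝ) := by
        rw [hy', Int.fract]
        push_cast
        rw [ht]
        ring
      rw [h2, Int.fract_sub_intCast]
    rw [hd, hf] at hK
    have hrm : (0:ℝ) < (r:ℝ)^m := by
      have := hr1R hr; positivity
    have hK2 := (div_le_div_iff_of_pos_right hrm).2 hK
    rw [Finset.sum_range_succ]
    have hd0 : (0:ℝ) < (r:ℝ) - 1 := by linarith [hr1R hr]
    have hr0 : (0:ℝ) < (r:ℝ) := by linarith [hr1R hr]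
    set c : ℝ := (r:ℝ)/((r:ℝ)-1) with hc
    set P := Int.fract ((r:ℝ)^(m+1) * y) * (1 - Int.fract ((r:ℝ)^(m+1) * y)) with hP
    have e1 : (c/(r:ℝ)^m) * (y'*(1-y')) = c * (y'*(1-y')) / (r:ℝ)^m := by ring
    have e2 : (dZ t + (c/(r:ℝ)) * P) / (r:ℝ)^m = dZ t/(r:ℝ)^m + (c/(r:ℝ)^(m+1)) * P := by
      rw [pow_succ]
      field_simp
    rw [e2] at hK2
    linarith [ih, hK2, e1]

lemma tak_lower (hr : 2 ≤ r) {y : ℝ} (h0 : 0 ≤ y) (h1 : y < 1) :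
    (r:ℝ)/((r:ℝ)-1) * (y*(1-y)) ≤ tak r y := by
  have hrR := hr1R hr
  have hd0 : (0:ℝ) < (r:ℝ) - 1 := by linarith
  have hr0 : (0:ℝ) < (r:ℝ) := by linarith
  set c : ℝ := (r:ℝ)/((r:ℝ)-1) with hc
  have hc0 : 0 < c := by positivity
  have hsum := tak_summable hr y
  have hS : ∀ m : ℕ, (∑ j ∈ Finset.range m, dZ ((r:ℝ)^j * y) / (r:ℝ)^j) ≤ tak r y := by
    intro m
    have h := Summable.sum_add_tsum_nat_add m hsum
    have htail : 0 ≤ ∑' i : ℕ, dZ ((r:ℝ)^(i+m) * y) / (r:ℝ)^(i+m) :=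
      tsum_nonneg fun i => div_nonneg (dZ_nonneg _) (by positivity)
    rw [tak_apply]
    linarith [h, htail]
  have hb : ∀ m : ℕ, c * (y*(1-y)) ≤ tak r y + (c * ((r:ℝ)⁻¹)^m) * (1/4) := by
    intro m
    have h := lower_aux hr h0 h1 m
    set q := Int.fract ((r:ℝ)^m * y) with hq
    have hq4 : q * (1 - q) ≤ 1/4 := by
      nlinarith [sq_nonneg (q - 1/2)]
    have hcm : (0:ℝ) ≤ c/(r:ℝ)^m := by positivity
    have h2 : (c/(r:ℝ)^m) * (q * (1-q)) ≤ (c/(r:ℝ)^m) * (1/4) :=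
      mul_le_mul_of_nonneg_left hq4 hcm
    have h3 : c/(r:ℝ)^m = c * ((r:ℝ)⁻¹)^m := by
      rw [div_eq_mul_inv, inv_pow]
    linarith [hS m, h, h2, h3.le, h3.ge]
  have hlim : Filter.Tendsto (fun m : ℕ => tak r y + (c * ((r:ℝ)⁻¹)^m) * (1/4)) Filter.atTop
      (nhds (tak r y + (c * 0) * (1/4))) := by
    apply Filter.Tendsto.const_add
    apply Filter.Tendsto.mul_const
    apply Filter.Tendsto.const_mul
    exact tendsto_pow_atTop_nhds_zero_of_lt_one (by positivity)
      (by rw [inv_lt_one_iff₀]; right; exact hrR)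
  have := ge_of_tendsto' hlim hb
  simpa using this

end

section
variable {r : ℕ}

lemma Del_add (r n : ℕ) (k : ℤ) (y : ℝ) (f g : ℝ → ℝ) :
    Del r (fun x => f x + g x) n k y = Del r f n k y + Del r g n k y := by
  unfold Del delP delM
  ring

lemma Del_sum (r n : ℕ) (k : ℤ) (y : ℝ) {ι : Type*} (s : Finset ι) (φ : ι → ℝ → ℝ) :
    Del r (fun x => ∑ j ∈ s, φ j x) n k y = ∑ j ∈ s, Del r (φ j) n k y := by
  induction s using Finset.cons_induction with
  | empty => simp [Del, delP, delM]
  | cons a s ha ih =>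
    simp only [Finset.sum_cons]
    rw [Del_add r n k y (φ a) (fun x => ∑ j ∈ s, φ j x), ih]

lemma Del_term_nonpos (hr : 2 ≤ r) {n j : ℕ} (hj : j < n) (k : ℤ) {y : ℝ}
    (hy0 : 0 < y) (hy1 : y < 1) :
    Del r (fun X => dZ ((r:ℝ)^j * X) / (r:ℝ)^j) n k y ≤ 0 := by
  have hrR := hr1R hr
  set N : ℝ := (r:ℝ)^n with hNdef
  have hN : 0 < N := by positivity
  have hRj : (0:ℝ) < (r:ℝ)^j := by positivity
  set R : ℤ := (r:ℤ)^(n-j) with hRdef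
  have hR : 0 < R := by positivity
  have hRreal : (0:ℝ) < (R:ℝ) := by exact_mod_cast hR
  set m : ℤ := k / R with hmdef
  have hm1 : (m:ℝ) * (R:ℝ) ≤ (k:ℝ) := by exact_mod_cast Int.ediv_mul_le k hR.ne'
  have hm2 : (k:ℝ) + 1 ≤ ((m:ℝ) + 1) * (R:ℝ) := by
    have := Int.lt_ediv_add_one_mul_self k hR
    have h2 : k + 1 ≤ (m + 1) * R := this
    exact_mod_cast h2
  set u := (r:ℝ)^j * ((k:ℝ)/N) with hu
  set v := (r:ℝ)^j * (((k:ℝ)+y)/N) with hv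
  set w := (r:ℝ)^j * (((k:ℝ)+1)/N) with hw
  have hjR : (r:ℝ)^j * (R:ℝ) = N := by
    have : ((R:ℤ):ℝ) = (r:ℝ)^(n-j) := by rw [hRdef]; push_cast; ring
    rw [this, ← pow_add]
    congr 1
    omega
  have hueq : u = (k:ℝ)/(R:ℝ) := by
    rw [hu, ← hjR]
    field_simp
  have hweq : w = ((k:ℝ)+1)/(R:ℝ) := by
    rw [hw, ← hjR]
    field_simp
  have hmem_u : u ∈ Icc (m:ℝ) ((m:ℝ)+1) := by
    rw [hueq]
    constructor
    · rw [le_div_iff₀ hRreal]; linarith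
    · rw [div_le_iff₀ hRreal]; nlinarith
  have hmem_w : w ∈ Icc (m:ℝ) ((m:ℝ)+1) := by
    rw [hweq]
    constructor
    · rw [le_div_iff₀ hRreal]; linarith
    · rw [div_le_iff₀ hRreal]; nlinarith
  have huv : u < v := by
    rw [hu, hv]
    gcongr
    · linarith
  have hvw : v < w := by
    rw [hv, hw]
    gcongr
  have hmem_v : v ∈ Icc (m:ℝ) ((m:ℝ)+1) := ⟨hmem_u.1.trans huv.le, hvw.le.trans hmem_w.2⟩
  have hslope := (dZ_concave m).slope_anti_adjacent hmem_u hmem_w huv hvw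
  have h1y : (0:ℝ) < 1 - y := by linarith
  have hwv : w - v = (r:ℝ)^j * ((1-y)/N) := by rw [hv, hw]; ring
  have hvu : v - u = (r:ℝ)^j * (y/N) := by rw [hu, hv]; ring
  have hdp : delP r (fun X => dZ ((r:ℝ)^j * X) / (r:ℝ)^j) n k y = (dZ w - dZ v)/(w - v) := by
    simp only [delP]
    rw [← hNdef, ← hv, ← hw, hwv]
    field_simp
  have hdm : delM r (fun X => dZ ((r:ℝ)^j * X) / (r:ℝ)^j) n k y = (dZ v - dZ u)/(v - u) := by
    simp only [delM]
    rw [← hNdef, ← hu, ← hv, hvu]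
    field_simp
  unfold Del
  rw [hdp, hdm, ← hNdef]
  exact mul_nonpos_of_nonneg_of_nonpos (by positivity) (by linarith [hslope])
end

section
variable {r : ℕ}

lemma Del_tail (hr : 2 ≤ r) (n : ℕ) (k : ℤ) {y : ℝ} (hy0 : 0 < y) (hy1 : y < 1) :
    Del r (fun X => ∑' j : ℕ, dZ ((r:ℝ)^(j+n) * X) / (r:ℝ)^(j+n)) n k y
      ≤ -2 * ((r:ℝ)/((r:ℝ)-1)) * (r:ℝ)^n := by
  have hrR := hr1R hr
  have hr0 : (0:ℝ) < (r:ℝ) := by linarith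
  set N : ℝ := (r:ℝ)^n with hNdef
  have hN : 0 < N := by positivity
  have h1y : (0:ℝ) < 1 - y := by linarith
  set f2 : ℝ → ℝ := fun X => ∑' j : ℕ, dZ ((r:ℝ)^(j+n) * X) / (r:ℝ)^(j+n) with hf2
  have hA : f2 ((k:ℝ)/N) = 0 := by
    rw [hf2]
    simp only
    have : ∀ j : ℕ, dZ ((r:ℝ)^(j+n) * ((k:ℝ)/N)) / (r:ℝ)^(j+n) = 0 := by
      intro j
      have h : (r:ℝ)^(j+n) * ((k:ℝ)/N) = (((r:ℤ)^j * k : ℤ) : ℝ) := by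
        rw [hNdef, pow_add]
        push_cast
        field_simp
      rw [h, dZ_int, zero_div]
    simp [this]
  have hC : f2 (((k:ℝ)+1)/N) = 0 := by
    rw [hf2]
    simp only
    have : ∀ j : ℕ, dZ ((r:ℝ)^(j+n) * (((k:ℝ)+1)/N)) / (r:ℝ)^(j+n) = 0 := by
      intro j
      have h : (r:ℝ)^(j+n) * (((k:ℝ)+1)/N) = (((r:ℤ)^j * (k+1) : ℤ) : ℝ) := by
        rw [hNdef, pow_add]
        push_cast
        field_simp
      rw [h, dZ_int, zero_div]
    simp [this]
  have hB : f2 (((k:ℝ)+y)/N) = tak r y * N⁻¹ := by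
    rw [hf2]
    simp only
    have hterm : ∀ j : ℕ, dZ ((r:ℝ)^(j+n) * (((k:ℝ)+y)/N)) / (r:ℝ)^(j+n)
        = (dZ ((r:ℝ)^j * y) / (r:ℝ)^j) * N⁻¹ := by
      intro j
      have h : (r:ℝ)^(j+n) * (((k:ℝ)+y)/N) = (r:ℝ)^j * y + (((r:ℤ)^j * k : ℤ) : ℝ) := by
        rw [hNdef, pow_add]
        push_cast
        field_simp
        ring
      rw [h, dZ_add_int, hNdef, pow_add]
      field_simp
    rw [tsum_congr hterm, tsum_mul_right, tak_apply]
  have hT : (r:ℝ)/((r:ℝ)-1) * (y*(1-y)) ≤ tak r y := tak_lower hr hy0.le hy1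
  have hDel : Del r f2 n k y = (-2) * N * (tak r y / (y*(1-y))) := by
    unfold Del delP delM
    rw [← hNdef, hA, hB, hC]
    have hyne : y ≠ 0 := ne_of_gt hy0
    have h1yne : (1:ℝ) - y ≠ 0 := ne_of_gt h1y
    field_simp
    ring
  rw [hDel]
  have hyy : (0:ℝ) < y * (1-y) := mul_pos hy0 h1y
  have hdiv : (r:ℝ)/((r:ℝ)-1) ≤ tak r y / (y*(1-y)) := by
    rw [le_div_iff₀ hyy]
    linarith [hT]
  nlinarith [hdiv, hN]

lemma memP_tak (hr : 2 ≤ r) : memP r ((r:ℝ)/((r:ℝ)-1)) (tak r) := by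
  intro n k hk0 hk1 y hy
  obtain ⟨hy0, hy1⟩ := hy
  have hdecomp : tak r = fun X => (∑ j ∈ Finset.range n, dZ ((r:ℝ)^j * X) / (r:ℝ)^j)
      + ∑' j : ℕ, dZ ((r:ℝ)^(j+n) * X) / (r:ℝ)^(j+n) := by
    funext X
    rw [tak_apply]
    exact (Summable.sum_add_tsum_nat_add n (tak_summable hr X)).symm
  rw [hdecomp, Del_add]
  have h1 : Del r (fun X => ∑ j ∈ Finset.range n, dZ ((r:ℝ)^j * X) / (r:ℝ)^j) n k y ≤ 0 := by
    rw [Del_sum]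
    apply Finset.sum_nonpos
    intro j hj
    exact Del_term_nonpos hr (Finset.mem_range.mp hj) k hy0 hy1
  have h2 := Del_tail hr n k hy0 hy1
  linarith

end

section
variable {r : ℕ}

lemma tak_nd (hr : 2 ≤ r) (x : ℝ) : ¬ DifferentiableAt ℝ (tak r) x := by
  intro hx
  have hrR := hr1R hr
  have hr0 : (0:ℝ) < r := by linarith
  set c : ℝ := (r:ℝ)/((r:ℝ)-1) with hc
  have hc1 : 1 ≤ c := by
    rw [hc, le_div_iff₀ (by linarith : (0:ℝ) < (r:ℝ)-1)]
    linarith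
  -- reduce to fract x
  set x' : ℝ := Int.fract x with hx'def
  have hx'mem0 : 0 ≤ x' := Int.fract_nonneg x
  have hx'mem1 : x' < 1 := Int.fract_lt_one x
  have hx' : DifferentiableAt ℝ (tak r) x' := by
    have hcomp : DifferentiableAt ℝ ((tak r) ∘ (fun z : ℝ => z + (⌊x⌋ : ℝ))) x' := by
      apply DifferentiableAt.comp
      · show DifferentiableAt ℝ (tak r) (x' + (⌊x⌋:ℝ))
        rw [show x' + (⌊x⌋:ℝ) = x from Int.fract_add_floor x]
        exact hx
      · exact (differentiable_id.add_const _).differentiableAt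
    have heq : (tak r) ∘ (fun z : ℝ => z + (⌊x⌋ : ℝ)) = tak r := by
      funext z
      exact tak_add_int z ⌊x⌋
    rwa [heq] at hcomp
  -- derivative and little-o
  set L : ℝ := deriv (tak r) x' with hL
  have hd : HasDerivAt (tak r) L x' := hx'.hasDerivAt
  have ho := hasDerivAt_iff_isLittleO.mp hd
  have hev := ho.def (by norm_num : (0:ℝ) < 1/16)
  obtain ⟨δ, hδ, hball⟩ := Metric.eventually_nhds_iff.mp hev
  have hest : ∀ z : ℝ, |z - x'| < δ → |tak r z - tak r x' - (z - x') * L| ≤ 1/16 * |z - x'| := by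
    intro z hz
    have := hball (show dist z x' < δ by rwa [Real.dist_eq])
    simpa [Real.norm_eq_abs, smul_eq_mul] using this
  -- choose n
  obtain ⟨n, hn⟩ := pow_unbounded_of_one_lt (2/δ) hrR
  set N : ℝ := (r:ℝ)^n with hNdef
  have hN : 0 < N := by positivity
  have h2N : 2/N < δ := by
    rw [div_lt_iff₀ hN]
    rw [div_lt_iff₀ hδ] at hn
    nlinarith
  have hδN2 : 2 < δ * N := by rw [div_lt_iff₀ hN] at h2N; linarith
  have h1N : 1/N < δ := by rw [div_lt_iff₀ hN]; linarith
  -- the grid point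
  set t : ℝ := N * x' with htdef
  have ht0 : 0 ≤ t := by positivity
  set k : ℤ := ⌊t⌋ with hkdef
  set y : ℝ := Int.fract t with hydef
  have hk0 : (0:ℤ) ≤ k := Int.floor_nonneg.2 ht0
  have hky : (k:ℝ) + y = t := by
    rw [hkdef, hydef]
    linarith [Int.fract_add_floor t]
  have htN : t < N := by nlinarith
  have hk1 : k ≤ (r:ℤ)^n - 1 := by
    have h1 : (k:ℝ) ≤ t := Int.floor_le t
    have h2 : (k:ℝ) < (((r:ℤ)^n : ℤ) : ℝ) := by push_cast; rw [← hNdef]; linarith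
    have h3 : k < (r:ℤ)^n := by exact_mod_cast h2
    omega
  have hy0 : 0 ≤ y := Int.fract_nonneg t
  have hy1 : y < 1 := Int.fract_lt_one t
  by_cases hyz : y = 0
  · -- r-adic case : x' = k/N, use y = 1/2
    have ht : t = (k:ℝ) := by rw [← hky, hyz]; ring
    have hxA : (k:ℝ)/N = x' := by
      rw [← ht, htdef]
      field_simp
    have hDel := memP_tak hr n k hk0 hk1 (1/2) ⟨by norm_num, by norm_num⟩
    set a : ℝ := delP r (tak r) n k (1/2) with hadef
    set b : ℝ := delM r (tak r) n k (1/2) with hbdef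
    have hab : a - b ≤ -c := by
      have h := hDel
      unfold Del at h
      rw [← hadef, ← hbdef, ← hNdef] at h
      have h' : (2*N) * (a - b) ≤ (2*N) * (-c) := by
        linarith [h, (by ring : -2*c*N = (2*N)*(-c)), (by ring : 2*N*(a-b) = (2*N)*(a-b))]
      exact le_of_mul_le_mul_left h' (by positivity)
    set D : ℝ := (1/2)/N with hDdef
    have hD : 0 < D := by rw [hDdef]; positivity
    have hD1N : D ≤ 1/N := by rw [hDdef]; gcongr; norm_num
    set B : ℝ := ((k:ℝ) + 1/2)/N with hBdef
    set C : ℝ := ((k:ℝ) + 1)/N with hCdef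
    have hBx : B - x' = D := by rw [hBdef, hDdef, ← hxA]; ring
    have hCx : C - x' = 2*D := by rw [hCdef, hDdef, ← hxA]; ring
    have hEB := hest B (by rw [hBx, abs_of_pos hD]; linarith)
    have hEC := hest C (by
      rw [hCx, abs_of_pos (by linarith : (0:ℝ) < 2*D)]
      calc 2*D ≤ 2*(1/N) := by linarith
        _ = 2/N := by ring
        _ < δ := h2N)
    rw [hBx, abs_of_pos hD] at hEB
    rw [hCx, abs_of_pos (by linarith : (0:ℝ) < 2*D)] at hEC
    have hb_eq : b = (tak r B - tak r x') / D := by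
      rw [hbdef]
      unfold delM
      rw [← hNdef, hxA, ← hBdef, ← hDdef]
    have ha_eq : a = (tak r C - tak r B) / D := by
      rw [hadef]
      unfold delP
      rw [← hNdef, ← hBdef, ← hCdef]
      norm_num
      rfl
    have hbD : b * D = tak r B - tak r x' := by
      rw [hb_eq]; field_simp
    have haD : a * D = tak r C - tak r B := by
      rw [ha_eq]; field_simp
    have habD : a * D - b * D ≤ -(c * D) := by
      have h8 := mul_le_mul_of_nonneg_right hab hD.le
      linarith [h8, (by ring : (a - b) * D = a * D - b * D), (by ring : -c * D = -(c * D))]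
    have hcD : -(c * D) ≤ -D := by
      have h9 := mul_le_mul_of_nonneg_right hc1 hD.le
      linarith [h9, (by ring : (1:ℝ) * D = D)]
    obtain ⟨e1, e2⟩ := abs_le.mp hEB
    obtain ⟨e3, e4⟩ := abs_le.mp hEC
    linarith [habD, hcD, haD, hbD, e1, e2, e3, e4, hD]
  · -- non-grid case : x' = (k+y)/N
    have hy0' : 0 < y := lt_of_le_of_ne hy0 (Ne.symm hyz)
    have h1y : 0 < 1 - y := by linarith
    have hB : ((k:ℝ) + y)/N = x' := by
      rw [hky, htdef]
      field_simp
    have hDel := memP_tak hr n k hk0 hk1 y ⟨hy0', hy1⟩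
    set a : ℝ := delP r (tak r) n k y with hadef
    set b : ℝ := delM r (tak r) n k y with hbdef
    have hab : a - b ≤ -c := by
      have h := hDel
      unfold Del at h
      rw [← hadef, ← hbdef, ← hNdef] at h
      have h' : (2*N) * (a - b) ≤ (2*N) * (-c) := by
        linarith [h, (by ring : -2*c*N = (2*N)*(-c)), (by ring : 2*N*(a-b) = (2*N)*(a-b))]
      exact le_of_mul_le_mul_left h' (by positivity)
    set DM : ℝ := y/N with hDMdef
    set DP : ℝ := (1-y)/N with hDPdef
    have hDM : 0 < DM := by rw [hDMdef]; positivity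
    have hDP : 0 < DP := by rw [hDPdef]; positivity
    set A : ℝ := (k:ℝ)/N with hAdef
    set C : ℝ := ((k:ℝ) + 1)/N with hCdef
    have hAx : A - x' = -DM := by rw [hAdef, hDMdef, ← hB]; ring
    have hCx : C - x' = DP := by rw [hCdef, hDPdef, ← hB]; ring
    have hDM1 : DM ≤ 1/N := by rw [hDMdef]; gcongr
    have hDP1 : DP ≤ 1/N := by rw [hDPdef]; gcongr; linarith
    have hEA := hest A (by rw [hAx, abs_neg, abs_of_pos hDM]; linarith)
    have hEC := hest C (by rw [hCx, abs_of_pos hDP]; linarith)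
    rw [hAx, abs_neg, abs_of_pos hDM] at hEA
    rw [hCx, abs_of_pos hDP] at hEC
    have ha_eq : a = (tak r C - tak r x') / DP := by
      rw [hadef]
      unfold delP
      rw [← hNdef, hB, ← hCdef, ← hDPdef]
    have hb_eq : b = (tak r x' - tak r A) / DM := by
      rw [hbdef]
      unfold delM
      rw [← hNdef, hB, ← hAdef, ← hDMdef]
    have haD : a * DP = tak r C - tak r x' := by rw [ha_eq]; field_simp
    have hbD : b * DM = tak r x' - tak r A := by rw [hb_eq]; field_simp
    have haL : |a - L| ≤ 1/16 := by
      have h5 : |a - L| * DP ≤ (1/16) * DP := by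
        rw [← abs_of_pos hDP, ← abs_mul]
        have h6 : (a - L) * DP = tak r C - tak r x' - DP * L := by
          rw [sub_mul, haD]; ring
        rw [h6, abs_of_pos hDP]
        exact hEC
      exact le_of_mul_le_mul_right h5 hDP
    have hbL : |b - L| ≤ 1/16 := by
      have h5 : |b - L| * DM ≤ (1/16) * DM := by
        rw [← abs_of_pos hDM, ← abs_mul]
        have h6 : (b - L) * DM = -(tak r A - tak r x' - (-DM) * L) := by
          rw [sub_mul, hbD]; ring
        rw [h6, abs_neg, abs_of_pos hDM]
        exact hEA
      exact le_of_mul_le_mul_right h5 hDM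
    obtain ⟨e1, e2⟩ := abs_le.mp haL
    obtain ⟨e3, e4⟩ := abs_le.mp hbL
    linarith [hab, hc1]

end


theorem stmt16 (r : ℕ) (hr : 2 ≤ r) :
    memP r ((r:ℝ) / ((r:ℝ) - 1)) (tak r) ∧
      ∀ x : ℝ, ¬ DifferentiableAt ℝ (tak r) x :=
  ⟨memP_tak hr, fun x => tak_nd hr x⟩
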